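/- arXiv:2603.12024 — 2 statements merged into one kernel-verified Lean document; each statement's English description precedes it below -/
import Mathlib

section
/- Contrapositive form: if a PMD {M^{a|x}} on ℂ^d is star-incompatible with respect to x*, then for every pure bipartite state |ψ⟩ ∈ ℂ^d ⊗ ℂ^d of Schmidt rank d, the assemblage σ^{a|x} = Tr_A[(M^{a|x} ⊗ 𝟙)|ψ⟩⟨ψ|] is star-steerable with respect to x* (i.e., it admits no star-unsteerable decomposition). -/
/-!
Writing the Schmidt-rank-`d` state as the invertible coefficient matrix `Ψ` and `C := Ψᵀ`,
the assemblage element of an effect `N` is `C Nᵀ Cᴴ`. The map `ρ ↦ (C⁻¹ ρ C⁻¹ᴴ)ᵀ` preserves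
positivity and sums and undoes this, so it carries a star-unsteerable decomposition of the
assemblage to a joint POVM witnessing star-compatibility.
-/

open Matrix BigOperators Kronecker ComplexOrder

/-- Partial trace over the first tensor factor. -/
noncomputable def trA {dA dB : Type*} [Fintype dA]
    (M : Matrix (dA × dB) (dA × dB) ℂ) : Matrix dB dB ℂ :=
  Matrix.of fun j j' => ∑ i, M (i, j) (i, j')

theorem Matrix.isUnit_of_rank_eq_card {n K : Type*} [Fintype n] [DecidableEq n] [Field K]
    {A : Matrix n n K} (h : A.rank = Fintype.card n) : IsUnit A := by
  rw [← mulVec_surjective_iff_isUnit]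
  have hrange : LinearMap.range A.mulVecLin = ⊤ := by
    apply Submodule.eq_top_of_finrank_eq
    rw [← Matrix.rank, h, Module.finrank_fintype_fun_eq_card]
  exact LinearMap.range_eq_top.mp hrange

theorem trA_kronecker_one_mul_vecMulVec {dA dB : Type*} [Fintype dA] [Fintype dB]
    [DecidableEq dB] (M : Matrix dA dA ℂ) (ψ : dA × dB → ℂ) :
    trA ((M ⊗ₖ (1 : Matrix dB dB ℂ)) * vecMulVec ψ (star ψ))
      = (of fun i j => ψ (i, j))ᵀ * Mᵀ * ((of fun i j => ψ (i, j))ᵀ)ᴴ := by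
  ext j j'
  simp only [trA, of_apply, mul_apply, vecMulVec_apply, kroneckerMap_apply, one_apply,
    transpose_apply, conjTranspose_apply, Pi.star_apply]
  rw [Finset.sum_comm, ← Finset.univ_product_univ, Finset.sum_product]
  refine (Finset.sum_congr rfl fun x _ => Finset.sum_comm).trans ?_
  simp only [mul_ite, mul_one, mul_zero, ite_mul, zero_mul, Finset.sum_ite_eq,
    Finset.mem_univ, if_true]
  rw [Finset.sum_comm]
  refine Finset.sum_congr rfl fun i _ => ?_
  rw [Finset.sum_mul]
  exact Finset.sum_congr rfl fun k _ => by ring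

section Unsteer

variable {n : Type*} [Fintype n] [DecidableEq n] (C : Matrix n n ℂ)

noncomputable def unsteer (ρ : Matrix n n ℂ) : Matrix n n ℂ :=
  (C⁻¹ * ρ * C⁻¹ᴴ)ᵀ

theorem unsteer_steer {C : Matrix n n ℂ} (hC : IsUnit C.det) (N : Matrix n n ℂ) :
    unsteer C (C * Nᵀ * Cᴴ) = N := by
  have hCH : IsUnit Cᴴ.det := by rw [det_conjTranspose]; exact hC.star
  simp only [unsteer, conjTranspose_nonsing_inv, Matrix.mul_assoc]
  rw [nonsing_inv_mul_cancel_left _ _ hC, mul_nonsing_inv _ hCH, Matrix.mul_one,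
    transpose_transpose]

theorem sum_unsteer {ι : Type*} (s : Finset ι) (ρ : ι → Matrix n n ℂ) :
    ∑ i ∈ s, unsteer C (ρ i) = unsteer C (∑ i ∈ s, ρ i) := by
  simp only [unsteer, ← transpose_sum, ← Finset.sum_mul, ← Finset.mul_sum]

theorem Matrix.PosSemidef.unsteer {ρ : Matrix n n ℂ} (hρ : ρ.PosSemidef) :
    (unsteer C ρ).PosSemidef :=
  (hρ.mul_mul_conjTranspose_same C⁻¹).transpose

end Unsteer

theorem starIncompatible_imp_starSteerable_general (d : ℕ)
    (A X : Type) [Fintype A] [Fintype X] (xs : X)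
    (M : X → A → Matrix (Fin d) (Fin d) ℂ)
    (hpovm : ∀ x, ∑ a, M x a = 1)
    (hincomp : ¬ ∃ J : X → A → A → Matrix (Fin d) (Fin d) ℂ,
      (∀ x, x ≠ xs → ∀ a b, (J x a b).PosSemidef) ∧
      (∀ x, x ≠ xs → ∑ a, ∑ b, J x a b = 1) ∧
      (∀ x, x ≠ xs → ∀ a, ∑ b, J x a b = M x a) ∧
      (∀ x, x ≠ xs → ∀ b, ∑ a, J x a b = M xs b)) :
    ∀ ψ : Fin d × Fin d → ℂ,
      (∑ p : Fin d × Fin d, Complex.normSq (ψ p) = 1) →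
      (Matrix.of fun i j : Fin d => ψ (i, j)).rank = d →
      ¬ ∃ ρ : X → A → A → Matrix (Fin d) (Fin d) ℂ,
        (∀ x, x ≠ xs → ∀ a b, (ρ x a b).PosSemidef) ∧
        (∀ x, x ≠ xs → ∀ a, ∑ b, ρ x a b
            = trA ((M x a ⊗ₖ (1 : Matrix (Fin d) (Fin d) ℂ)) * Matrix.vecMulVec ψ (star ψ))) ∧
        (∀ x, x ≠ xs → ∀ b, ∑ a, ρ x a b
            = trA ((M xs b ⊗ₖ (1 : Matrix (Fin d) (Fin d) ℂ)) * Matrix.vecMulVec ψ (star ψ))) := by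
  rintro ψ - hrank ⟨ρ, hρpsd, hρa, hρb⟩
  set C := (of fun i j : Fin d => ψ (i, j))ᵀ
  have hC : IsUnit C.det := by
    rw [det_transpose, ← isUnit_iff_isUnit_det]
    exact isUnit_of_rank_eq_card (hrank.trans (Fintype.card_fin d).symm)
  have hmarg_a : ∀ x, x ≠ xs → ∀ a, ∑ b, unsteer C (ρ x a b) = M x a := fun x hx a => by
    rw [sum_unsteer, hρa x hx a, trA_kronecker_one_mul_vecMulVec, unsteer_steer hC]
  refine hincomp ⟨fun x a b => unsteer C (ρ x a b),
    fun x hx a b => (hρpsd x hx a b).unsteer C, fun x hx => ?_, hmarg_a, fun x hx b => ?_⟩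
  · simp only [hmarg_a x hx, hpovm]
  · rw [sum_unsteer, hρb x hx b, trA_kronecker_one_mul_vecMulVec, unsteer_steer hC]

/-- contrapositive form: if a PMD is star-incompatible w.r.t. x*, then for
every pure state of Schmidt rank d the resulting assemblage is star-steerable w.r.t. x*,
i.e. it admits no star-unsteerable decomposition. -/
theorem starIncompatible_imp_starSteerable (d : ℕ) (hd : 0 < d)
    (A X : Type) [Fintype A] [Fintype X] (xs : X)
    (M : X → A → Matrix (Fin d) (Fin d) ℂ)
    (hpsd : ∀ x a, (M x a).PosSemidef) (hpovm : ∀ x, ∑ a, M x a = 1)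
    (hincomp : ¬ ∃ J : X → A → A → Matrix (Fin d) (Fin d) ℂ,
      (∀ x, x ≠ xs → ∀ a b, (J x a b).PosSemidef) ∧
      (∀ x, x ≠ xs → ∑ a, ∑ b, J x a b = 1) ∧
      (∀ x, x ≠ xs → ∀ a, ∑ b, J x a b = M x a) ∧
      (∀ x, x ≠ xs → ∀ b, ∑ a, J x a b = M xs b)) :
    ∀ ψ : Fin d × Fin d → ℂ,
      (∑ p : Fin d × Fin d, Complex.normSq (ψ p) = 1) →
      (Matrix.of fun i j : Fin d => ψ (i, j)).rank = d →
      ¬ ∃ ρ : X → A → A → Matrix (Fin d) (Fin d) ℂ,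
        (∀ x, x ≠ xs → ∀ a b, (ρ x a b).PosSemidef) ∧
        (∀ x, x ≠ xs → ∀ a, ∑ b, ρ x a b
            = trA ((M x a ⊗ₖ (1 : Matrix (Fin d) (Fin d) ℂ)) * Matrix.vecMulVec ψ (star ψ))) ∧
        (∀ x, x ≠ xs → ∀ b, ∑ a, ρ x a b
            = trA ((M xs b ⊗ₖ (1 : Matrix (Fin d) (Fin d) ℂ)) * Matrix.vecMulVec ψ (star ψ))) :=
  starIncompatible_imp_starSteerable_general d A X xs M hpovm hincomp
end

section
/- If a PMD {M^{a|x}} on ℂ^d is star-compatible with respect to x*, then for any density operator ρ_AB on ℂ^d ⊗ ℂ^d, the resulting assemblage σ^{a|x} = Tr_A[(M^{a|x} ⊗ 𝟙)ρ_AB] is star-unsteerable with respect to x*: the operators ρ^{a,b|x} := Tr_A[(J^{a,b|x} ⊗ 𝟙)ρ_AB] (where J witnesses star-compatibility) are positive semidefinite and satisfy Σ_b ρ^{a,b|x} = σ^{a|x} and Σ_a ρ^{a,b|x} = σ^{b|x*}. -/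
/-!
Since `J^{a,b|x} ⪰ 0` factors as `Bᴴ * B`, cyclicity of the partial trace in the first factor
turns `Tr_A[(J ⊗ 𝟙) ρ]` into `Tr_A[(B ⊗ 𝟙) ρ (B ⊗ 𝟙)ᴴ]`, the partial trace of a positive
semidefinite matrix. The marginal conditions follow from linearity of `M ↦ Tr_A[(M ⊗ 𝟙) ρ]`.
-/

open Matrix BigOperators Kronecker ComplexOrder

section PartialTrace

variable {dA dB : Type*} [Fintype dA]

lemma trA_eq_sum_submatrix (M : Matrix (dA × dB) (dA × dB) ℂ) :
    trA M = ∑ i, M.submatrix (Prod.mk i) (Prod.mk i) := by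
  ext j j'
  simp only [trA, of_apply, Matrix.sum_apply, submatrix_apply]

lemma posSemidef_trA {M : Matrix (dA × dB) (dA × dB) ℂ} (hM : M.PosSemidef) :
    (trA M).PosSemidef := by
  rw [trA_eq_sum_submatrix]
  exact posSemidef_sum _ fun i _ => hM.submatrix (Prod.mk i)

lemma trA_sum {ι : Type*} (s : Finset ι) (f : ι → Matrix (dA × dB) (dA × dB) ℂ) :
    trA (∑ i ∈ s, f i) = ∑ i ∈ s, trA (f i) := by
  ext j j'
  simp only [trA, of_apply, Matrix.sum_apply]
  exact Finset.sum_comm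

variable [Fintype dB] [DecidableEq dB]

lemma trA_kronecker_one_mul_comm (C : Matrix dA dA ℂ) (N : Matrix (dA × dB) (dA × dB) ℂ) :
    trA ((C ⊗ₖ (1 : Matrix dB dB ℂ)) * N) = trA (N * (C ⊗ₖ (1 : Matrix dB dB ℂ))) := by
  ext j j'
  simp only [trA, of_apply, mul_apply, kroneckerMap_apply, one_apply, Fintype.sum_prod_type,
    mul_ite, mul_one, mul_zero, ite_mul, zero_mul, Finset.sum_ite_eq,
    Finset.sum_ite_eq', Finset.mem_univ, if_true]
  rw [Finset.sum_comm]
  exact Finset.sum_congr rfl fun i _ => Finset.sum_congr rfl fun i' _ => mul_comm _ _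

lemma sum_trA_kronecker_one_mul {ι : Type*} (s : Finset ι) (f : ι → Matrix dA dA ℂ)
    (ρ : Matrix (dA × dB) (dA × dB) ℂ) :
    ∑ i ∈ s, trA ((f i ⊗ₖ (1 : Matrix dB dB ℂ)) * ρ) =
      trA (((∑ i ∈ s, f i) ⊗ₖ (1 : Matrix dB dB ℂ)) * ρ) := by
  have hsum : ∑ i ∈ s, (f i ⊗ₖ (1 : Matrix dB dB ℂ)) = (∑ i ∈ s, f i) ⊗ₖ 1 := by
    ext ⟨i, k⟩ ⟨i', k'⟩
    simp [Matrix.sum_apply, Finset.sum_mul]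
  rw [← trA_sum, ← Finset.sum_mul, hsum]

lemma posSemidef_trA_kronecker_one_mul {C : Matrix dA dA ℂ} (hC : C.PosSemidef)
    {ρ : Matrix (dA × dB) (dA × dB) ℂ} (hρ : ρ.PosSemidef) :
    (trA ((C ⊗ₖ (1 : Matrix dB dB ℂ)) * ρ)).PosSemidef := by
  obtain ⟨B, rfl⟩ : ∃ B : Matrix dA dA ℂ, C = Bᴴ * B := by
    classical
    open scoped MatrixOrder in exact CStarAlgebra.nonneg_iff_eq_star_mul_self.mp hC.nonneg
  have hsplit : (Bᴴ * B) ⊗ₖ (1 : Matrix dB dB ℂ) =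
      (Bᴴ ⊗ₖ (1 : Matrix dB dB ℂ)) * (B ⊗ₖ (1 : Matrix dB dB ℂ)) := by
    rw [← mul_kronecker_mul, one_mul]
  have hstar : Bᴴ ⊗ₖ (1 : Matrix dB dB ℂ) = (B ⊗ₖ (1 : Matrix dB dB ℂ))ᴴ := by
    rw [conjTranspose_kronecker, conjTranspose_one]
  rw [hsplit, Matrix.mul_assoc, trA_kronecker_one_mul_comm, hstar]
  exact posSemidef_trA (hρ.mul_mul_conjTranspose_same _)

end PartialTrace

theorem starCompatible_imp_starUnsteerable_general (d : ℕ)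
    (A X : Type) [Fintype A] (xs : X)
    (M : X → A → Matrix (Fin d) (Fin d) ℂ)
    (J : X → A → A → Matrix (Fin d) (Fin d) ℂ)
    (hJpsd : ∀ x, x ≠ xs → ∀ a b, (J x a b).PosSemidef)
    (hJm1 : ∀ x, x ≠ xs → ∀ a, ∑ b, J x a b = M x a)
    (hJm2 : ∀ x, x ≠ xs → ∀ b, ∑ a, J x a b = M xs b)
    (ρAB : Matrix ((Fin d) × (Fin d)) ((Fin d) × (Fin d)) ℂ)
    (hρ : ρAB.PosSemidef) :
    let σ : X → A → Matrix (Fin d) (Fin d) ℂ :=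
      fun x a => trA ((M x a ⊗ₖ (1 : Matrix (Fin d) (Fin d) ℂ)) * ρAB)
    let ρab : X → A → A → Matrix (Fin d) (Fin d) ℂ :=
      fun x a b => trA ((J x a b ⊗ₖ (1 : Matrix (Fin d) (Fin d) ℂ)) * ρAB)
    (∀ x, x ≠ xs → ∀ a b, (ρab x a b).PosSemidef) ∧
    (∀ x, x ≠ xs → ∀ a, ∑ b, ρab x a b = σ x a) ∧
    (∀ x, x ≠ xs → ∀ b, ∑ a, ρab x a b = σ xs b) := by
  refine ⟨fun x hx a b => posSemidef_trA_kronecker_one_mul (hJpsd x hx a b) hρ,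
    fun x hx a => ?_, fun x hx b => ?_⟩
  · rw [sum_trA_kronecker_one_mul, hJm1 x hx a]
  · rw [sum_trA_kronecker_one_mul, hJm2 x hx b]

/-- a star-compatible PMD generates only star-unsteerable assemblages,
witnessed by ρ^{a,b|x} = Tr_A[(J^{a,b|x} ⊗ 𝟙)ρ_AB]. -/
theorem starCompatible_imp_starUnsteerable (d : ℕ) (hd : 0 < d)
    (A X : Type) [Fintype A] [Fintype X] (xs : X)
    (M : X → A → Matrix (Fin d) (Fin d) ℂ)
    (hpsd : ∀ x a, (M x a).PosSemidef) (hpovm : ∀ x, ∑ a, M x a = 1)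
    (J : X → A → A → Matrix (Fin d) (Fin d) ℂ)
    (hJpsd : ∀ x, x ≠ xs → ∀ a b, (J x a b).PosSemidef)
    (hJsum : ∀ x, x ≠ xs → ∑ a, ∑ b, J x a b = 1)
    (hJm1 : ∀ x, x ≠ xs → ∀ a, ∑ b, J x a b = M x a)
    (hJm2 : ∀ x, x ≠ xs → ∀ b, ∑ a, J x a b = M xs b)
    (ρAB : Matrix ((Fin d) × (Fin d)) ((Fin d) × (Fin d)) ℂ)
    (hρ : ρAB.PosSemidef) (htr : ρAB.trace = 1) :
    let σ : X → A → Matrix (Fin d) (Fin d) ℂ :=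
      fun x a => trA ((M x a ⊗ₖ (1 : Matrix (Fin d) (Fin d) ℂ)) * ρAB)
    let ρab : X → A → A → Matrix (Fin d) (Fin d) ℂ :=
      fun x a b => trA ((J x a b ⊗ₖ (1 : Matrix (Fin d) (Fin d) ℂ)) * ρAB)
    (∀ x, x ≠ xs → ∀ a b, (ρab x a b).PosSemidef) ∧
    (∀ x, x ≠ xs → ∀ a, ∑ b, ρab x a b = σ x a) ∧
    (∀ x, x ≠ xs → ∀ b, ∑ a, ρab x a b = σ xs b) :=
  starCompatible_imp_starUnsteerable_general d A X xs M J hJpsd hJm1 hJm2 ρAB hρ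
end
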